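/- Let T be a symmetric bilinear form and J, J̃ vectors on Minkowski space ℝ⁴ satisfying the local mass-charge inequality. Let X be a future-directed null vector (η(X,X) = 0, X ≠ 0, X 0 > 0) and let N be a future-directed timelike vector, and suppose η(N, T♯X) = 0. Then there exists χ ≥ 0 such that T(u,v) = χ * η(X,u) * η(X,v) for all u, v, and moreover J = 0 and J̃ = 0. -/

import Mathlib

noncomputable def eta (x y : Fin 4 → ℝ) : ℝ :=
  x 0 * y 0 - x 1 * y 1 - x 2 * y 2 - x 3 * y 3

/-!
The causal vector `T♯X` is `η`-orthogonal to the timelike `N`, hence zero. So `T(Z,Z)` and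
`η(T♯Z,T♯Z)` do not change when `Z` is moved along `X`; since every `v` with `η(X,v) > 0` can be
moved into the future cone, both are nonnegative on that half-space. For `w ⊥ X` apply this to
`e₀ + t w`, `e₀ = (1,0,0,0)`, for all real `t`: the leading coefficient shows that `T♯w` is causal;
being orthogonal to the null `X` it is a multiple of `X`, so `T(w,w) = η(T♯w,w) = 0`, and then the
discriminant forces `T(e₀,w) = 0`. Splitting vectors along `e₀` and `X^⊥` and polarizing gives
`T = χ η(X,·) ⊗ η(X,·)`. Now every `T♯Z` is a multiple of `X`, hence null, and the mass-charge
inequality forces `η(J,Z) = η(J̃,Z) = 0` on the future cone, which spans.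
-/

local notation "e₀" => (![1, 0, 0, 0] : Fin 4 → ℝ)

lemma nonneg_of_forall_quadratic_nonneg {a b c : ℝ}
    (h : ∀ t : ℝ, 0 ≤ a * t ^ 2 + b * t + c) : 0 ≤ a := by
  have hd : b ^ 2 - 4 * a * c ≤ 0 := discrim_le_zero fun t => by nlinarith [h t]
  nlinarith [h 0, h 1, h (-1)]

lemma eta_comm (x y : Fin 4 → ℝ) : eta x y = eta y x := by
  simp only [eta]; ring

lemma eta_add_left (x y z : Fin 4 → ℝ) : eta (x + y) z = eta x z + eta y z := by
  simp only [eta, Pi.add_apply]; ring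

lemma eta_smul_left (a : ℝ) (x z : Fin 4 → ℝ) : eta (a • x) z = a * eta x z := by
  simp only [eta, Pi.smul_apply, smul_eq_mul]; ring

lemma eta_sub_right (x y z : Fin 4 → ℝ) : eta x (y - z) = eta x y - eta x z := by
  simp only [eta, Pi.sub_apply]; ring

lemma eta_smul_right (a : ℝ) (x z : Fin 4 → ℝ) : eta x (a • z) = a * eta x z := by
  simp only [eta, Pi.smul_apply, smul_eq_mul]; ring

lemma eta_add_smul_self (x y : Fin 4 → ℝ) (t : ℝ) :
    eta (x + t • y) (x + t • y) = eta y y * t ^ 2 + 2 * eta x y * t + eta x x := by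
  simp only [eta, Pi.add_apply, Pi.smul_apply, smul_eq_mul]; ring

lemma eta_e₀_left (x : Fin 4 → ℝ) : eta e₀ x = x 0 := by
  simp [eta]

lemma eq_of_forall_eta_eq {v v' : Fin 4 → ℝ} (h : ∀ u, eta v u = eta v' u) : v = v' := by
  ext i
  fin_cases i
  · simpa [eta] using h ![1, 0, 0, 0]
  · simpa [eta] using h ![0, 1, 0, 0]
  · simpa [eta] using h ![0, 0, 1, 0]
  · simpa [eta] using h ![0, 0, 0, 1]

lemma eq_zero_of_forall_future_causal_eta_eq_zero {v : Fin 4 → ℝ}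
    (h : ∀ Z, 0 ≤ eta Z Z → 0 ≤ Z 0 → eta v Z = 0) : v = 0 := by
  have h0 := h ![1, 0, 0, 0] (by simp [eta]) (by simp)
  have h1 := h ![1, 1, 0, 0] (by simp [eta]) (by simp)
  have h2 := h ![1, 0, 1, 0] (by simp [eta]) (by simp)
  have h3 := h ![1, 0, 0, 1] (by simp [eta]) (by simp)
  simp only [eta, Matrix.cons_val_zero, Matrix.cons_val_one, Matrix.cons_val, mul_one, mul_zero,
    sub_zero] at h0 h1 h2 h3
  ext i
  fin_cases i <;> simp only [Fin.zero_eta, Fin.mk_one, Fin.reduceFinMk, Pi.zero_apply] <;>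
    linarith

lemma eq_zero_of_eta_eq_zero_of_timelike {N v : Fin 4 → ℝ} (hN : 0 < eta N N)
    (hv : 0 ≤ eta v v) (h : eta N v = 0) : v = 0 := by
  simp only [eta] at hN hv h
  have hcs : (N 0 * v 0) ^ 2 ≤ (N 1 ^ 2 + N 2 ^ 2 + N 3 ^ 2) * v 0 ^ 2 :=
    calc (N 0 * v 0) ^ 2 = (N 1 * v 1 + N 2 * v 2 + N 3 * v 3) ^ 2 := by
          rw [show N 0 * v 0 = N 1 * v 1 + N 2 * v 2 + N 3 * v 3 by linarith]
      _ ≤ (N 1 ^ 2 + N 2 ^ 2 + N 3 ^ 2) * (v 1 ^ 2 + v 2 ^ 2 + v 3 ^ 2) := by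
          nlinarith [sq_nonneg (N 1 * v 2 - N 2 * v 1), sq_nonneg (N 1 * v 3 - N 3 * v 1),
            sq_nonneg (N 2 * v 3 - N 3 * v 2)]
      _ ≤ (N 1 ^ 2 + N 2 ^ 2 + N 3 ^ 2) * v 0 ^ 2 := by gcongr; linarith
  have h0 : v 0 = 0 := by
    have : (N 0 ^ 2 - (N 1 ^ 2 + N 2 ^ 2 + N 3 ^ 2)) * v 0 ^ 2 ≤ 0 := by linarith
    exact pow_eq_zero_iff two_ne_zero |>.mp <| le_antisymm
      (nonpos_of_mul_nonpos_right this (by linarith)) (sq_nonneg _)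
  have : v 1 = 0 ∧ v 2 = 0 ∧ v 3 = 0 := by
    refine ⟨?_, ?_, ?_⟩ <;> nlinarith [sq_nonneg (v 1), sq_nonneg (v 2), sq_nonneg (v 3)]
  ext i
  fin_cases i <;> simp [h0, this]

lemma exists_eq_smul_of_eta_eq_zero_of_null {X v : Fin 4 → ℝ} (hX : eta X X = 0)
    (hX0 : X 0 ≠ 0) (hv : 0 ≤ eta v v) (h : eta X v = 0) : ∃ c : ℝ, v = c • X := by
  simp only [eta] at hX hv h
  have hsum : (v 1 * X 0 - v 0 * X 1) ^ 2 + (v 2 * X 0 - v 0 * X 2) ^ 2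
      + (v 3 * X 0 - v 0 * X 3) ^ 2
      = -X 0 ^ 2 * (v 0 * v 0 - v 1 * v 1 - v 2 * v 2 - v 3 * v 3) := by
    linear_combination (2 * v 0 * X 0) * h - v 0 ^ 2 * hX
  obtain ⟨h1, h2, h3⟩ :
      v 1 * X 0 = v 0 * X 1 ∧ v 2 * X 0 = v 0 * X 2 ∧ v 3 * X 0 = v 0 * X 3 := by
    refine ⟨?_, ?_, ?_⟩ <;>
    nlinarith [mul_nonneg (sq_nonneg (X 0)) hv, sq_nonneg (v 1 * X 0 - v 0 * X 1),
      sq_nonneg (v 2 * X 0 - v 0 * X 2), sq_nonneg (v 3 * X 0 - v 0 * X 3)]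
  refine ⟨v 0 / X 0, ?_⟩
  ext i
  fin_cases i <;>
    simp only [Fin.zero_eta, Fin.mk_one, Fin.reduceFinMk, Pi.smul_apply, smul_eq_mul] <;>
    field_simp <;> linarith

lemma exists_future_causal_add_smul {X v : Fin 4 → ℝ} (hX : eta X X = 0) (hX0 : 0 < X 0)
    (hv : 0 < eta X v) : ∃ a : ℝ, 0 ≤ eta (v + a • X) (v + a • X) ∧ 0 ≤ (v + a • X) 0 := by
  have heta (a : ℝ) : eta (v + a • X) (v + a • X) = eta v v + a * (2 * eta X v) := by
    rw [eta_add_smul_self, hX, eta_comm]; ring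
  have eventually_nonneg (c d : ℝ) (hd : 0 < d) : ∀ᶠ a in Filter.atTop, 0 ≤ c + a * d :=
    (Filter.tendsto_atTop_add_const_left _ c
      (Filter.tendsto_id.atTop_mul_const hd)).eventually_ge_atTop 0
  obtain ⟨a, ha⟩ := ((eventually_nonneg (eta v v) (2 * eta X v) (by positivity)).and
    (eventually_nonneg (v 0) (X 0) hX0)).exists
  exact ⟨a, by rw [heta]; exact ha.1, by simpa using ha.2⟩

section Sharp

variable {T : LinearMap.BilinForm ℝ (Fin 4 → ℝ)} {Tsharp : (Fin 4 → ℝ) → (Fin 4 → ℝ)}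

lemma apply_add_smul_self (hT : ∀ x y, T x y = T y x) (x y : Fin 4 → ℝ) (t : ℝ) :
    T (x + t • y) (x + t • y) = T y y * t ^ 2 + 2 * T x y * t + T x x := by
  simp only [map_add, map_smul, LinearMap.add_apply, LinearMap.smul_apply, smul_eq_mul, hT y x]
  ring

lemma sharp_add_smul (hTs : ∀ x u, eta (Tsharp x) u = T x u) (x y : Fin 4 → ℝ) (t : ℝ) :
    Tsharp (x + t • y) = Tsharp x + t • Tsharp y :=
  eq_of_forall_eta_eq fun u => by
    simp only [hTs, eta_add_left, eta_smul_left, map_add, map_smul, LinearMap.add_apply,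
      LinearMap.smul_apply, smul_eq_mul]

variable (hT : ∀ x y, T x y = T y x) (hTs : ∀ x u, eta (Tsharp x) u = T x u)
  (hcone : ∀ Z, 0 ≤ eta Z Z → 0 ≤ Z 0 → 0 ≤ T Z Z ∧ 0 ≤ eta (Tsharp Z) (Tsharp Z))
  {X : Fin 4 → ℝ} (hX : eta X X = 0) (hX0 : 0 < X 0) (hTX : Tsharp X = 0)
include hT hTs hcone hX hX0 hTX

lemma apply_self_and_sharp_nonneg_of_eta_pos {v : Fin 4 → ℝ} (hv : 0 < eta X v) :
    0 ≤ T v v ∧ 0 ≤ eta (Tsharp v) (Tsharp v) := by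
  obtain ⟨a, hZ, hZ0⟩ := exists_future_causal_add_smul hX hX0 hv
  have hTXu (u : Fin 4 → ℝ) : T X u = 0 := by
    rw [← hTs, hTX]; simp [eta]
  have hsharp : Tsharp (v + a • X) = Tsharp v := by
    rw [sharp_add_smul hTs, hTX, smul_zero, add_zero]
  have happly : T (v + a • X) (v + a • X) = T v v := by
    rw [apply_add_smul_self hT, hTXu, hT, hTXu]; ring
  simpa only [hsharp, happly] using hcone _ hZ hZ0

lemma apply_eq_zero_of_eta_eq_zero {w : Fin 4 → ℝ} (hw : eta X w = 0) :
    T w w = 0 ∧ T e₀ w = 0 := by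
  have hpos (t : ℝ) : 0 < eta X (e₀ + t • w) := by
    rw [eta_comm, eta_add_left, eta_smul_left, eta_e₀_left, eta_comm w, hw]
    linarith
  have hcausal : 0 ≤ eta (Tsharp w) (Tsharp w) :=
    nonneg_of_forall_quadratic_nonneg fun t => by
    simpa only [sharp_add_smul hTs, eta_add_smul_self] using
      (apply_self_and_sharp_nonneg_of_eta_pos hT hTs hcone hX hX0 hTX (hpos t)).2
  obtain ⟨c, hc⟩ := exists_eq_smul_of_eta_eq_zero_of_null hX hX0.ne' hcausal
    (by rw [eta_comm, hTs, hT, ← hTs, hTX]; simp [eta])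
  have hww : T w w = 0 := by
    rw [← hTs, hc, eta_smul_left, hw, mul_zero]
  have hd : discrim (T w w) (2 * T e₀ w) (T e₀ e₀) ≤ 0 := discrim_le_zero fun t => by
    simpa only [apply_add_smul_self hT, sq] using
      (apply_self_and_sharp_nonneg_of_eta_pos hT hTs hcone hX hX0 hTX (hpos t)).1
  rw [discrim, hww] at hd
  exact ⟨hww, by nlinarith⟩

end Sharp

lemma apply_eq_mul_eta_mul_eta {T : LinearMap.BilinForm ℝ (Fin 4 → ℝ)}
    (hT : ∀ x y, T x y = T y x)
    {X : Fin 4 → ℝ} (hX0 : X 0 ≠ 0) (h : ∀ w, eta X w = 0 → T w w = 0 ∧ T e₀ w = 0)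
    (u v : Fin 4 → ℝ) : T u v = T e₀ e₀ / X 0 ^ 2 * eta X u * eta X v := by
  have hdiag (u : Fin 4 → ℝ) : T u u = T e₀ e₀ / X 0 ^ 2 * eta X u ^ 2 := by
    set α := eta X u / X 0 with hα
    have hw : eta X (u - α • e₀) = 0 := by
      rw [eta_sub_right, eta_smul_right, eta_comm X e₀, eta_e₀_left, hα, div_mul_cancel₀ _ hX0,
        sub_self]
    obtain ⟨hww, hew⟩ := h _ hw
    have := apply_add_smul_self hT (u - α • e₀) e₀ α
    rw [sub_add_cancel, hww, hT (u - α • e₀) e₀, hew] at this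
    rw [this, hα]; field_simp; ring
  have hpolar := apply_add_smul_self hT u v 1
  rw [one_smul, hdiag (u + v), hdiag u, hdiag v, eta_comm X, eta_add_left, eta_comm u,
    eta_comm v] at hpolar
  linear_combination -hpolar / 2

theorem nullDust_of_localMassCharge_general
    (T : LinearMap.BilinForm ℝ (Fin 4 → ℝ)) (hT : ∀ x y, T x y = T y x)
    (J Jt : Fin 4 → ℝ)
    (Tsharp : (Fin 4 → ℝ) → (Fin 4 → ℝ))
    (hTs : ∀ x u, eta (Tsharp x) u = T x u)
    (hLMC : ∀ Z : Fin 4 → ℝ, eta Z Z ≥ 0 → Z 0 ≥ 0 →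
        T Z Z ≥ 0 ∧ eta (Tsharp Z) (Tsharp Z) ≥ (eta J Z) ^ 2 + (eta Jt Z) ^ 2)
    (X : Fin 4 → ℝ) (hXnull : eta X X = 0) (hXfut : X 0 > 0)
    (N : Fin 4 → ℝ) (hNt : eta N N > 0)
    (hNTX : eta N (Tsharp X) = 0) :
    ∃ χ : ℝ, 0 ≤ χ ∧ (∀ u v : Fin 4 → ℝ, T u v = χ * eta X u * eta X v)
      ∧ J = 0 ∧ Jt = 0 := by
  have hcone (Z : Fin 4 → ℝ) (hZ : 0 ≤ eta Z Z) (hZ0 : 0 ≤ Z 0) :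
      0 ≤ T Z Z ∧ 0 ≤ eta (Tsharp Z) (Tsharp Z) :=
    ⟨(hLMC Z hZ hZ0).1, le_trans (by positivity) (hLMC Z hZ hZ0).2⟩
  have hTX : Tsharp X = 0 :=
    eq_zero_of_eta_eq_zero_of_timelike hNt (hcone X hXnull.ge hXfut.le).2 hNTX
  have hform := apply_eq_mul_eta_mul_eta hT hXfut.ne'
    fun w hw => apply_eq_zero_of_eta_eq_zero hT hTs hcone hXnull hXfut hTX hw
  have hnull (Z : Fin 4 → ℝ) : eta (Tsharp Z) (Tsharp Z) = 0 := by
    have hsharp : Tsharp Z = (T e₀ e₀ / X 0 ^ 2 * eta X Z) • X :=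
      eq_of_forall_eta_eq fun u => by rw [hTs, hform, eta_smul_left]
    rw [hsharp, eta_smul_left, eta_smul_right, hXnull, mul_zero, mul_zero]
  have hcurrents (Z : Fin 4 → ℝ) (hZ : 0 ≤ eta Z Z) (hZ0 : 0 ≤ Z 0) :
      eta J Z = 0 ∧ eta Jt Z = 0 := by
    have := (hLMC Z hZ hZ0).2
    rw [hnull] at this
    constructor <;> nlinarith [sq_nonneg (eta J Z), sq_nonneg (eta Jt Z)]
  exact ⟨_, div_nonneg (hcone e₀ (by simp [eta]) (by simp)).1 (sq_nonneg _), hform,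
    eq_zero_of_forall_future_causal_eta_eq_zero fun Z hZ hZ0 => (hcurrents Z hZ hZ0).1,
    eq_zero_of_forall_future_causal_eta_eq_zero fun Z hZ hZ0 => (hcurrents Z hZ hZ0).2⟩

/-- Null-case of Lemma 2.8: if the local mass-charge inequality holds, X is
future-directed null, N is future-directed timelike and η(N, T♯X) = 0, then
T is null dust along X and the currents vanish. -/
theorem nullDust_of_localMassCharge
    (T : LinearMap.BilinForm ℝ (Fin 4 → ℝ)) (hT : ∀ x y, T x y = T y x)
    (J Jt : Fin 4 → ℝ)
    (Tsharp : (Fin 4 → ℝ) → (Fin 4 → ℝ))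
    (hTs : ∀ x u, eta (Tsharp x) u = T x u)
    (hLMC : ∀ Z : Fin 4 → ℝ, eta Z Z ≥ 0 → Z 0 ≥ 0 →
        T Z Z ≥ 0 ∧ eta (Tsharp Z) (Tsharp Z) ≥ (eta J Z) ^ 2 + (eta Jt Z) ^ 2)
    (X : Fin 4 → ℝ) (hXnull : eta X X = 0) (hXne : X ≠ 0) (hXfut : X 0 > 0)
    (N : Fin 4 → ℝ) (hNt : eta N N > 0) (hNfut : N 0 > 0)
    (hNTX : eta N (Tsharp X) = 0) :
    ∃ χ : ℝ, 0 ≤ χ ∧ (∀ u v : Fin 4 → ℝ, T u v = χ * eta X u * eta X v)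
      ∧ J = 0 ∧ Jt = 0 :=
  nullDust_of_localMassCharge_general T hT J Jt Tsharp hTs hLMC X hXnull hXfut N hNt hNTX
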